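/- arXiv:1703.02214 — 2 statements merged into one kernel-verified Lean document; each statement's English description precedes it below -/
import Mathlib

section
/- Suppose the Frank constants satisfy k1 > 0, k2 > |k4|, k3 > 0 and 2k1 > k2 + k4. Then there exists a constant a > 0, depending only on k1, k2, k3, k4, such that for every unit vector z ∈ ℝ³ and every real 3×3 matrix p satisfying the tangency constraint Σ_i z^i p^i_α = 0 for each α ∈ {1,2,3}, one has W(z,p) ≥ a·|p|². -/
noncomputable section

open MeasureTheory Metric Filter Topology

abbrev E3 : Type := EuclideanSpace ℝ (Fin 3)
abbrev V3 : Type := Fin 3 → ℝ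
abbrev M3 : Type := Matrix (Fin 3) (Fin 3) ℝ

/-- trace of a 3×3 matrix -/
def trA (p : M3) : ℝ := ∑ i, p i i

/-- curl vector: c(p)_i = Σ_{j,k} ε_{ijk} p^k_j -/
def curlv (p : M3) : V3 := ![p 2 1 - p 1 2, p 0 2 - p 2 0, p 1 0 - p 0 1]

def dot3 (a b : V3) : ℝ := ∑ i, a i * b i

def cross3 (a b : V3) : V3 :=
  ![a 1 * b 2 - a 2 * b 1, a 2 * b 0 - a 0 * b 2, a 0 * b 1 - a 1 * b 0]

def trSq (p : M3) : ℝ := ∑ i, ∑ j, p i j * p j i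

def frobSq (p : M3) : ℝ := ∑ i, ∑ j, (p i j) ^ 2

def normSq3 (a : V3) : ℝ := ∑ i, (a i) ^ 2

def eN (a : V3) : ℝ := Real.sqrt (normSq3 a)

def frobN (p : M3) : ℝ := Real.sqrt (frobSq p)

/-- Oseen–Frank density -/
def W (k1 k2 k3 k4 : ℝ) (z : V3) (p : M3) : ℝ :=
  k1 * (trA p) ^ 2 + k2 * (dot3 z (curlv p)) ^ 2 + k3 * normSq3 (cross3 z (curlv p))
    + (k2 + k4) * (trSq p - (trA p) ^ 2)

/-- W_{u^i} -/
def Wu (k1 k2 k3 k4 : ℝ) (z : V3) (p : M3) (i : Fin 3) : ℝ :=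
  deriv (fun s : ℝ => W k1 k2 k3 k4 (z + s • (Pi.single i (1 : ℝ) : V3)) p) 0

/-- W_{p^i_α} -/
def Wp (k1 k2 k3 k4 : ℝ) (z : V3) (p : M3) (i α : Fin 3) : ℝ :=
  deriv (fun s : ℝ => W k1 k2 k3 k4 z (p + s • Matrix.single i α (1 : ℝ))) 0

def Wuu (k1 k2 k3 k4 : ℝ) (z : V3) (p : M3) (i j : Fin 3) : ℝ :=
  deriv (fun s : ℝ => Wu k1 k2 k3 k4 (z + s • (Pi.single j (1 : ℝ) : V3)) p i) 0

def Wup (k1 k2 k3 k4 : ℝ) (z : V3) (p : M3) (i j β : Fin 3) : ℝ :=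
  deriv (fun s : ℝ => Wu k1 k2 k3 k4 z (p + s • Matrix.single j β (1 : ℝ)) i) 0

def Wpp (k1 k2 k3 k4 : ℝ) (z : V3) (p : M3) (i α j β : Fin 3) : ℝ :=
  deriv (fun s : ℝ => Wp k1 k2 k3 k4 z (p + s • Matrix.single j β (1 : ℝ)) i α) 0

def StrongLegendre (k1 k2 k3 k4 a : ℝ) : Prop :=
  ∀ z : V3, normSq3 z = 1 → ∀ q ξ : M3,
    a * frobSq ξ ≤ ∑ i, ∑ α, ∑ j, ∑ β, Wpp k1 k2 k3 k4 z q i α j β * ξ i α * ξ j β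

/-- standard basis direction -/
def e3 (α : Fin 3) : E3 := EuclideanSpace.single α 1

/-- partial derivative ∂_α f -/
def pd (f : E3 → ℝ) (α : Fin 3) (x : E3) : ℝ := fderiv ℝ f x (e3 α)

def lap (f : E3 → ℝ) (x : E3) : ℝ := ∑ α, pd (fun y => pd f α y) α x

/-- gradient matrix (∇u)^i_α = ∂_α u^i -/
def gradM (u : E3 → V3) (x : E3) : M3 := Matrix.of fun i α => pd (fun y => u y i) α x

/-- |∇w|² -/
def gradSqV (w : E3 → V3) (x : E3) : ℝ := frobSq (gradM w x)

/-- |∇²w|² -/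
def hessSqV (w : E3 → V3) (x : E3) : ℝ :=
  ∑ i, ∑ α, ∑ β, (pd (fun y => pd (fun z => w z i) α y) β x) ^ 2

/-- |∇³w|² -/
def d3SqV (w : E3 → V3) (x : E3) : ℝ :=
  ∑ i, ∑ α, ∑ β, ∑ γ,
    (pd (fun y => pd (fun z => pd (fun z' => w z' i) α z) β y) γ x) ^ 2

/-- |∇φ|² for scalar φ -/
def gradSqS (f : E3 → ℝ) (x : E3) : ℝ := ∑ α, (pd f α x) ^ 2

/-- |∇^k f|² (sum of squares of all k-th order partials) -/
def dkSq : ℕ → (E3 → ℝ) → E3 → ℝ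
  | 0, f, x => (f x) ^ 2
  | (n + 1), f, x => ∑ α, dkSq n (fun y => pd f α y) x

/-- smooth solution of the Ericksen–Leslie system on ℝ³ × (0,T) -/
def IsELSolution (k1 k2 k3 k4 : ℝ) (T : ℝ) (v u : ℝ → E3 → V3) (P : ℝ → E3 → ℝ) : Prop :=
  ContDiffOn ℝ (⊤ : ℕ∞) (fun q : ℝ × E3 => (v q.1 q.2, u q.1 q.2, P q.1 q.2))
    ((Set.Ioo 0 T) ×ˢ (Set.univ : Set E3)) ∧
  (∀ t ∈ Set.Ioo 0 T, ∀ x : E3, normSq3 (u t x) = 1) ∧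
  (∀ t ∈ Set.Ioo 0 T, ∀ x : E3,
    (∀ i : Fin 3,
      deriv (fun s => v s x i) t + (∑ j, v t x j * pd (fun y => v t y i) j x)
          + pd (fun y => P t y) i x
        = lap (fun y => v t y i) x
          - ∑ j, pd (fun y => ∑ k, pd (fun z => u t z k) i y
              * Wp k1 k2 k3 k4 (u t y) (gradM (u t) y) k j) j x) ∧
    (∑ j, pd (fun y => v t y j) j x = 0) ∧
    (∀ i : Fin 3,
      deriv (fun s => u s x i) t + (∑ j, v t x j * pd (fun y => u t y i) j x)
        = (∑ α, pd (fun y => Wp k1 k2 k3 k4 (u t y) (gradM (u t) y) i α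
              - ∑ k, u t y k * u t y i * Wp k1 k2 k3 k4 (u t y) (gradM (u t) y) k α) α x)
          - Wu k1 k2 k3 k4 (u t x) (gradM (u t) x) i
          + (∑ k, Wu k1 k2 k3 k4 (u t x) (gradM (u t) x) k * u t x i * u t x k)
          + (∑ α, ∑ k, Wp k1 k2 k3 k4 (u t x) (gradM (u t) x) k α
              * pd (fun y => u t y k) α x * u t x i)
          + (∑ α, ∑ k, Wp k1 k2 k3 k4 (u t x) (gradM (u t) x) k α
              * u t x k * pd (fun y => u t y i) α x)))

/-- F^{ij} = ∂_i u^k W_{p^k_j}(u,∇u) + v^i v^j -/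
def FijF (k1 k2 k3 k4 : ℝ) (v u : ℝ → E3 → V3) (t : ℝ) (i j : Fin 3) (x : E3) : ℝ :=
  (∑ k, pd (fun y => u t y k) i x * Wp k1 k2 k3 k4 (u t x) (gradM (u t) x) k j)
    + v t x i * v t x j

/-- canonical-pressure condition -/
def CanonicalPressure (k1 k2 k3 k4 : ℝ) (T : ℝ) (v u : ℝ → E3 → V3) (P : ℝ → E3 → ℝ) : Prop :=
  ∀ t ∈ Set.Ioo 0 T,
    (∀ i j : Fin 3, MemLp (fun x => FijF k1 k2 k3 k4 v u t i j x) 2 (volume : Measure E3)) ∧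
    MemLp (fun x => P t x) 2 (volume : Measure E3) ∧
    ∀ᵐ ξ : E3, VectorFourier.fourierIntegral Real.fourierChar volume (innerₗ E3) (fun x => (P t x : ℂ)) ξ
      = ∑ i, ∑ j, (((ξ i * ξ j / (∑ l, (ξ l) ^ 2)) : ℝ) : ℂ)
          * VectorFourier.fourierIntegral Real.fourierChar volume (innerₗ E3)
            (fun x => (FijF k1 k2 k3 k4 v u t i j x : ℂ)) ξ

/-- local uniform L³ norm: ‖g‖_{L³_R} -/
def l3loc (R : ℝ) (g : E3 → ℝ) : ℝ :=
  ⨆ x : E3, (∫ y in Metric.ball x R, |g y| ^ 3) ^ (3⁻¹ : ℝ)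

def IsCutoff (φ : E3 → ℝ) : Prop := ContDiff ℝ (⊤ : ℕ∞) φ ∧ HasCompactSupport φ

def WeakGradient (u0 : E3 → V3) (gu0 : E3 → M3) : Prop :=
  ∀ φ : E3 → ℝ, IsCutoff φ → ∀ i α : Fin 3,
    ∫ x : E3, u0 x i * pd φ α x = - ∫ x : E3, gu0 x i α * φ x

def WeakDivFree (v0 : E3 → V3) : Prop :=
  ∀ φ : E3 → ℝ, IsCutoff φ → ∫ x : E3, ∑ j, v0 x j * pd φ j x = 0


set_option maxHeartbeats 1000000 in
private lemma csQ (m00 m01 m02 m11 m12 m22 q00 q01 q02 q11 q12 q22 : ℝ) :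
    (m00*q00+m11*q11+m22*q22+2*(m01*q01+m02*q02+m12*q12))^2 ≤
      (m00^2+m11^2+m22^2+2*(m01^2+m02^2+m12^2)) * (q00^2+q11^2+q22^2+2*(q01^2+q02^2+q12^2)) := by
  have h : (m00^2+m11^2+m22^2+2*(m01^2+m02^2+m12^2)) * (q00^2+q11^2+q22^2+2*(q01^2+q02^2+q12^2))
      - (m00*q00+m11*q11+m22*q22+2*(m01*q01+m02*q02+m12*q12))^2
      = 1*(m00*q11-m11*q00)^2 + 1*(m00*q22-m22*q00)^2 + 1*(m11*q22-m22*q11)^2 + 2*(m00*q01-m01*q00)^2 + 2*(m00*q02-m02*q00)^2 + 2*(m00*q12-m12*q00)^2 + 2*(m11*q01-m01*q11)^2 + 2*(m11*q02-m02*q11)^2 + 2*(m11*q12-m12*q11)^2 + 2*(m22*q01-m01*q22)^2 + 2*(m22*q02-m02*q22)^2 + 2*(m22*q12-m12*q22)^2 + 4*(m01*q02-m02*q01)^2 + 4*(m01*q12-m12*q01)^2 + 4*(m02*q12-m12*q02)^2 := by ring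
  have h2 : (0:ℝ) ≤ 1*(m00*q11-m11*q00)^2 + 1*(m00*q22-m22*q00)^2 + 1*(m11*q22-m22*q11)^2 + 2*(m00*q01-m01*q00)^2 + 2*(m00*q02-m02*q00)^2 + 2*(m00*q12-m12*q00)^2 + 2*(m11*q01-m01*q11)^2 + 2*(m11*q02-m02*q11)^2 + 2*(m11*q12-m12*q11)^2 + 2*(m22*q01-m01*q22)^2 + 2*(m22*q02-m02*q22)^2 + 2*(m22*q12-m12*q22)^2 + 4*(m01*q02-m02*q01)^2 + 4*(m01*q12-m12*q01)^2 + 4*(m02*q12-m12*q02)^2 := by positivity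
  linarith [h, h2]

set_option maxHeartbeats 1000000 in
private lemma sym2 (m00 m01 m02 m11 m12 m22 z0 z1 z2 : ℝ)
    (hz : z0^2 + z1^2 + z2^2 = 1)
    (h0 : m00*z0 + m01*z1 + m02*z2 = 0)
    (h1 : m01*z0 + m11*z1 + m12*z2 = 0)
    (h2 : m02*z0 + m12*z1 + m22*z2 = 0) :
    (m00+m11+m22)^2 ≤ 2*(m00^2+m11^2+m22^2+2*(m01^2+m02^2+m12^2)) := by
  have cs := csQ m00 m01 m02 m11 m12 m22 (1-z0^2) (-(z0*z1)) (-(z0*z2)) (1-z1^2) (-(z1*z2)) (1-z2^2)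
  have hQsq : ((1-z0^2)^2+(1-z1^2)^2+(1-z2^2)^2+2*((-(z0*z1))^2+(-(z0*z2))^2+(-(z1*z2))^2)) = 2 := by
    linear_combination ((z0^2+z1^2+z2^2)-1)*hz
  have hMQ : (m00*(1-z0^2)+m11*(1-z1^2)+m22*(1-z2^2)+2*(m01*(-(z0*z1))+m02*(-(z0*z2))+m12*(-(z1*z2))))
      = (m00+m11+m22) := by
    linear_combination (-z0)*h0 + (-z1)*h1 + (-z2)*h2
  have e2 : (m00*(1-z0^2)+m11*(1-z1^2)+m22*(1-z2^2)+2*(m01*(-(z0*z1))+m02*(-(z0*z2))+m12*(-(z1*z2))))^2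
      = (m00+m11+m22)^2 := by rw [hMQ]
  have e1 : (m00^2+m11^2+m22^2+2*(m01^2+m02^2+m12^2)) * ((1-z0^2)^2+(1-z1^2)^2+(1-z2^2)^2+2*((-(z0*z1))^2+(-(z0*z2))^2+(-(z1*z2))^2)) = 2*(m00^2+m11^2+m22^2+2*(m01^2+m02^2+m12^2)) := by
    rw [hQsq]; ring
  linarith [cs, e1, e2]

set_option maxHeartbeats 4000000 in
private lemma of_key (k1 k2 k3 k4 : ℝ)
    (h2 : |k4| < k2) (h3 : 0 < k3) (h4 : k2 + k4 < 2*k1)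
    (z0 z1 z2 p00 p01 p02 p10 p11 p12 p20 p21 p22 : ℝ)
    (hz : z0^2 + z1^2 + z2^2 = 1)
    (g0 : z0*p00 + z1*p10 + z2*p20 = 0)
    (g1 : z0*p01 + z1*p11 + z2*p21 = 0)
    (g2 : z0*p02 + z1*p12 + z2*p22 = 0) :
    (min (min (2*k1-k2-k4) (k2+k4)) (min (k2-k4) k3)) * (p00^2+p01^2+p02^2+p10^2+p11^2+p12^2+p20^2+p21^2+p22^2) ≤ (k1*(p00+p11+p22)^2 + k2*(z0*(p21-p12)+z1*(p02-p20)+z2*(p10-p01))^2 + k3*((z1*(p10-p01)-z2*(p02-p20))^2+(z2*(p21-p12)-z0*(p10-p01))^2+(z0*(p02-p20)-z1*(p21-p12))^2) + (k2+k4)*((p00^2+p11^2+p22^2+2*(p01*p10+p02*p20+p12*p21)) - (p00+p11+p22)^2)) := by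
  obtain ⟨h2a, h2b⟩ := abs_lt.mp h2
  have hzu : (z0*(p00*z0+((p01+p10)/2)*z1+((p02+p20)/2)*z2)+z1*(((p01+p10)/2)*z0+p11*z1+((p12+p21)/2)*z2)+z2*(((p02+p20)/2)*z0+((p12+p21)/2)*z1+p22*z2)) = 0 := by linear_combination z0*g0 + z1*g1 + z2*g2
  have hmu : ((z1*(p10-p01)-z2*(p02-p20))^2+(z2*(p21-p12)-z0*(p10-p01))^2+(z0*(p02-p20)-z1*(p21-p12))^2) = 4*((p00*z0+((p01+p10)/2)*z1+((p02+p20)/2)*z2)^2+(((p01+p10)/2)*z0+p11*z1+((p12+p21)/2)*z2)^2+(((p02+p20)/2)*z0+((p12+p21)/2)*z1+p22*z2)^2) := by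
    linear_combination (4*(z0*p00+z1*p10+z2*p20)-8*(p00*z0+((p01+p10)/2)*z1+((p02+p20)/2)*z2))*g0 + (4*(z0*p01+z1*p11+z2*p21)-8*(((p01+p10)/2)*z0+p11*z1+((p12+p21)/2)*z2))*g1 + (4*(z0*p02+z1*p12+z2*p22)-8*(((p02+p20)/2)*z0+((p12+p21)/2)*z1+p22*z2))*g2
  have hMz0 : ((p00 - z0*(p00*z0+((p01+p10)/2)*z1+((p02+p20)/2)*z2) - (p00*z0+((p01+p10)/2)*z1+((p02+p20)/2)*z2)*z0)*z0+(((p01+p10)/2) - z0*(((p01+p10)/2)*z0+p11*z1+((p12+p21)/2)*z2) - (p00*z0+((p01+p10)/2)*z1+((p02+p20)/2)*z2)*z1)*z1+(((p02+p20)/2) - z0*(((p02+p20)/2)*z0+((p12+p21)/2)*z1+p22*z2) - (p00*z0+((p01+p10)/2)*z1+((p02+p20)/2)*z2)*z2)*z2) = 0 := by linear_combination (-(p00*z0+((p01+p10)/2)*z1+((p02+p20)/2)*z2))*hz + (-z0)*hzu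
  have hMz1 : ((((p01+p10)/2) - z0*(((p01+p10)/2)*z0+p11*z1+((p12+p21)/2)*z2) - (p00*z0+((p01+p10)/2)*z1+((p02+p20)/2)*z2)*z1)*z0+(p11 - z1*(((p01+p10)/2)*z0+p11*z1+((p12+p21)/2)*z2) - (((p01+p10)/2)*z0+p11*z1+((p12+p21)/2)*z2)*z1)*z1+(((p12+p21)/2) - z1*(((p02+p20)/2)*z0+((p12+p21)/2)*z1+p22*z2) - (((p01+p10)/2)*z0+p11*z1+((p12+p21)/2)*z2)*z2)*z2) = 0 := by linear_combination (-(((p01+p10)/2)*z0+p11*z1+((p12+p21)/2)*z2))*hz + (-z1)*hzu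
  have hMz2 : ((((p02+p20)/2) - z0*(((p02+p20)/2)*z0+((p12+p21)/2)*z1+p22*z2) - (p00*z0+((p01+p10)/2)*z1+((p02+p20)/2)*z2)*z2)*z0+(((p12+p21)/2) - z1*(((p02+p20)/2)*z0+((p12+p21)/2)*z1+p22*z2) - (((p01+p10)/2)*z0+p11*z1+((p12+p21)/2)*z2)*z2)*z1+(p22 - z2*(((p02+p20)/2)*z0+((p12+p21)/2)*z1+p22*z2) - (((p02+p20)/2)*z0+((p12+p21)/2)*z1+p22*z2)*z2)*z2) = 0 := by linear_combination (-(((p02+p20)/2)*z0+((p12+p21)/2)*z1+p22*z2))*hz + (-z2)*hzu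
  have hs2 := sym2 (p00 - z0*(p00*z0+((p01+p10)/2)*z1+((p02+p20)/2)*z2) - (p00*z0+((p01+p10)/2)*z1+((p02+p20)/2)*z2)*z0) (((p01+p10)/2) - z0*(((p01+p10)/2)*z0+p11*z1+((p12+p21)/2)*z2) - (p00*z0+((p01+p10)/2)*z1+((p02+p20)/2)*z2)*z1) (((p02+p20)/2) - z0*(((p02+p20)/2)*z0+((p12+p21)/2)*z1+p22*z2) - (p00*z0+((p01+p10)/2)*z1+((p02+p20)/2)*z2)*z2) (p11 - z1*(((p01+p10)/2)*z0+p11*z1+((p12+p21)/2)*z2) - (((p01+p10)/2)*z0+p11*z1+((p12+p21)/2)*z2)*z1) (((p12+p21)/2) - z1*(((p02+p20)/2)*z0+((p12+p21)/2)*z1+p22*z2) - (((p01+p10)/2)*z0+p11*z1+((p12+p21)/2)*z2)*z2) (p22 - z2*(((p02+p20)/2)*z0+((p12+p21)/2)*z1+p22*z2) - (((p02+p20)/2)*z0+((p12+p21)/2)*z1+p22*z2)*z2) z0 z1 z2 hz hMz0 hMz1 hMz2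
  have hMsq : ((p00 - z0*(p00*z0+((p01+p10)/2)*z1+((p02+p20)/2)*z2) - (p00*z0+((p01+p10)/2)*z1+((p02+p20)/2)*z2)*z0)^2+(p11 - z1*(((p01+p10)/2)*z0+p11*z1+((p12+p21)/2)*z2) - (((p01+p10)/2)*z0+p11*z1+((p12+p21)/2)*z2)*z1)^2+(p22 - z2*(((p02+p20)/2)*z0+((p12+p21)/2)*z1+p22*z2) - (((p02+p20)/2)*z0+((p12+p21)/2)*z1+p22*z2)*z2)^2+2*((((p01+p10)/2) - z0*(((p01+p10)/2)*z0+p11*z1+((p12+p21)/2)*z2) - (p00*z0+((p01+p10)/2)*z1+((p02+p20)/2)*z2)*z1)^2+(((p02+p20)/2) - z0*(((p02+p20)/2)*z0+((p12+p21)/2)*z1+p22*z2) - (p00*z0+((p01+p10)/2)*z1+((p02+p20)/2)*z2)*z2)^2+(((p12+p21)/2) - z1*(((p02+p20)/2)*z0+((p12+p21)/2)*z1+p22*z2) - (((p01+p10)/2)*z0+p11*z1+((p12+p21)/2)*z2)*z2)^2)) = (p00^2+p11^2+p22^2+2*((p01+p10)/2)^2+2*((p02+p20)/2)^2+2*((p12+p21)/2)^2)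 - 2*((p00*z0+((p01+p10)/2)*z1+((p02+p20)/2)*z2)^2+(((p01+p10)/2)*z0+p11*z1+((p12+p21)/2)*z2)^2+(((p02+p20)/2)*z0+((p12+p21)/2)*z1+p22*z2)^2) := by
    linear_combination 2*((p00*z0+((p01+p10)/2)*z1+((p02+p20)/2)*z2)^2+(((p01+p10)/2)*z0+p11*z1+((p12+p21)/2)*z2)^2+(((p02+p20)/2)*z0+((p12+p21)/2)*z1+p22*z2)^2)*hz + 2*(z0*(p00*z0+((p01+p10)/2)*z1+((p02+p20)/2)*z2)+z1*(((p01+p10)/2)*z0+p11*z1+((p12+p21)/2)*z2)+z2*(((p02+p20)/2)*z0+((p12+p21)/2)*z1+p22*z2))*hzu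
  have htrM : ((p00 - z0*(p00*z0+((p01+p10)/2)*z1+((p02+p20)/2)*z2) - (p00*z0+((p01+p10)/2)*z1+((p02+p20)/2)*z2)*z0)+(p11 - z1*(((p01+p10)/2)*z0+p11*z1+((p12+p21)/2)*z2) - (((p01+p10)/2)*z0+p11*z1+((p12+p21)/2)*z2)*z1)+(p22 - z2*(((p02+p20)/2)*z0+((p12+p21)/2)*z1+p22*z2) - (((p02+p20)/2)*z0+((p12+p21)/2)*z1+p22*z2)*z2)) = (p00+p11+p22) := by linear_combination (-2)*hzu
  have e2 : ((p00 - z0*(p00*z0+((p01+p10)/2)*z1+((p02+p20)/2)*z2) - (p00*z0+((p01+p10)/2)*z1+((p02+p20)/2)*z2)*z0)+(p11 - z1*(((p01+p10)/2)*z0+p11*z1+((p12+p21)/2)*z2) - (((p01+p10)/2)*z0+p11*z1+((p12+p21)/2)*z2)*z1)+(p22 - z2*(((p02+p20)/2)*z0+((p12+p21)/2)*z1+p22*z2) - (((p02+p20)/2)*z0+((p12+p21)/2)*z1+p22*z2)*z2))^2 = (p00+p11+p22)^2 := by rw [htrM]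
  have hB : (p00+p11+p22)^2 ≤ 2*(p00^2+p11^2+p22^2+2*((p01+p10)/2)^2+2*((p02+p20)/2)^2+2*((p12+p21)/2)^2) - ((z1*(p10-p01)-z2*(p02-p20))^2+(z2*(p21-p12)-z0*(p10-p01))^2+(z0*(p02-p20)-z1*(p21-p12))^2) := by linarith [hs2, hMsq, e2, hmu]
  have hW : (k1*(p00+p11+p22)^2 + k2*(z0*(p21-p12)+z1*(p02-p20)+z2*(p10-p01))^2 + k3*((z1*(p10-p01)-z2*(p02-p20))^2+(z2*(p21-p12)-z0*(p10-p01))^2+(z0*(p02-p20)-z1*(p21-p12))^2) + (k2+k4)*((p00^2+p11^2+p22^2+2*(p01*p10+p02*p20+p12*p21)) - (p00+p11+p22)^2)) = ((2*k1-k2-k4)/2)*(p00+p11+p22)^2 + ((k2+k4)/2)*(2*(p00^2+p11^2+p22^2+2*((p01+p10)/2)^2+2*((p02+p20)/2)^2+2*((p12+p21)/2)^2) - ((z1*(p10-p01)-z2*(p02-p20))^2+(z2*(p21-p12)-z0*(p10-p01))^2+(z0*(p02-p20)-z1*(p21-p12))^2) - (p00+p11+p22)^2) + ((k2-k4)/2)*(z0*(p21-p12)+z1*(p02-p20)+z2*(p10-p01))^2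 + k3*((z1*(p10-p01)-z2*(p02-p20))^2+(z2*(p21-p12)-z0*(p10-p01))^2+(z0*(p02-p20)-z1*(p21-p12))^2) := by
    linear_combination (((k2+k4)/2)*((p21-p12)^2+(p02-p20)^2+(p10-p01)^2))*hz
  have hn : (p00^2+p01^2+p02^2+p10^2+p11^2+p12^2+p20^2+p21^2+p22^2) = (p00+p11+p22)^2/2 + (2*(p00^2+p11^2+p22^2+2*((p01+p10)/2)^2+2*((p02+p20)/2)^2+2*((p12+p21)/2)^2) - ((z1*(p10-p01)-z2*(p02-p20))^2+(z2*(p21-p12)-z0*(p10-p01))^2+(z0*(p02-p20)-z1*(p21-p12))^2) - (p00+p11+p22)^2)/2 + (z0*(p21-p12)+z1*(p02-p20)+z2*(p10-p01))^2/2 + ((z1*(p10-p01)-z2*(p02-p20))^2+(z2*(p21-p12)-z0*(p10-p01))^2+(z0*(p02-p20)-z1*(p21-p12))^2) := by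
    linear_combination (-(((p21-p12)^2+(p02-p20)^2+(p10-p01)^2)/2))*hz
  have ha1 : (min (min (2*k1-k2-k4) (k2+k4)) (min (k2-k4) k3)) ≤ 2*k1-k2-k4 := (min_le_left _ _).trans (min_le_left _ _)
  have ha2 : (min (min (2*k1-k2-k4) (k2+k4)) (min (k2-k4) k3)) ≤ k2+k4 := (min_le_left _ _).trans (min_le_right _ _)
  have ha3 : (min (min (2*k1-k2-k4) (k2+k4)) (min (k2-k4) k3)) ≤ k2-k4 := (min_le_right _ _).trans (min_le_left _ _)
  have ha4 : (min (min (2*k1-k2-k4) (k2+k4)) (min (k2-k4) k3)) ≤ k3 := (min_le_right _ _).trans (min_le_right _ _)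
  have hm0 : (0:ℝ) ≤ ((z1*(p10-p01)-z2*(p02-p20))^2+(z2*(p21-p12)-z0*(p10-p01))^2+(z0*(p02-p20)-z1*(p21-p12))^2) := by positivity
  have q1 : (0:ℝ) ≤ (2*k1-k2-k4-(min (min (2*k1-k2-k4) (k2+k4)) (min (k2-k4) k3)))*(p00+p11+p22)^2 := mul_nonneg (by linarith) (sq_nonneg _)
  have q2 : (0:ℝ) ≤ (k2+k4-(min (min (2*k1-k2-k4) (k2+k4)) (min (k2-k4) k3)))*(2*(p00^2+p11^2+p22^2+2*((p01+p10)/2)^2+2*((p02+p20)/2)^2+2*((p12+p21)/2)^2) - ((z1*(p10-p01)-z2*(p02-p20))^2+(z2*(p21-p12)-z0*(p10-p01))^2+(z0*(p02-p20)-z1*(p21-p12))^2) - (p00+p11+p22)^2) := mul_nonneg (by linarith) (by linarith)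
  have q3 : (0:ℝ) ≤ (k2-k4-(min (min (2*k1-k2-k4) (k2+k4)) (min (k2-k4) k3)))*(z0*(p21-p12)+z1*(p02-p20)+z2*(p10-p01))^2 := mul_nonneg (by linarith) (sq_nonneg _)
  have q4 : (0:ℝ) ≤ (k3-(min (min (2*k1-k2-k4) (k2+k4)) (min (k2-k4) k3)))*((z1*(p10-p01)-z2*(p02-p20))^2+(z2*(p21-p12)-z0*(p10-p01))^2+(z0*(p02-p20)-z1*(p21-p12))^2) := mul_nonneg (by linarith) hm0
  have hfin : (k1*(p00+p11+p22)^2 + k2*(z0*(p21-p12)+z1*(p02-p20)+z2*(p10-p01))^2 + k3*((z1*(p10-p01)-z2*(p02-p20))^2+(z2*(p21-p12)-z0*(p10-p01))^2+(z0*(p02-p20)-z1*(p21-p12))^2) + (k2+k4)*((p00^2+p11^2+p22^2+2*(p01*p10+p02*p20+p12*p21)) - (p00+p11+p22)^2)) - (min (min (2*k1-k2-k4) (k2+k4)) (min (k2-k4) k3))*(p00^2+p01^2+p02^2+p10^2+p11^2+p12^2+p20^2+p21^2+p22^2)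
      = (2*k1-k2-k4-(min (min (2*k1-k2-k4) (k2+k4)) (min (k2-k4) k3)))*(p00+p11+p22)^2/2 + (k2+k4-(min (min (2*k1-k2-k4) (k2+k4)) (min (k2-k4) k3)))*(2*(p00^2+p11^2+p22^2+2*((p01+p10)/2)^2+2*((p02+p20)/2)^2+2*((p12+p21)/2)^2) - ((z1*(p10-p01)-z2*(p02-p20))^2+(z2*(p21-p12)-z0*(p10-p01))^2+(z0*(p02-p20)-z1*(p21-p12))^2) - (p00+p11+p22)^2)/2
        + (k2-k4-(min (min (2*k1-k2-k4) (k2+k4)) (min (k2-k4) k3)))*(z0*(p21-p12)+z1*(p02-p20)+z2*(p10-p01))^2/2 + (k3-(min (min (2*k1-k2-k4) (k2+k4)) (min (k2-k4) k3)))*((z1*(p10-p01)-z2*(p02-p20))^2+(z2*(p21-p12)-z0*(p10-p01))^2+(z0*(p02-p20)-z1*(p21-p12))^2) := by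
    linear_combination hW - (min (min (2*k1-k2-k4) (k2+k4)) (min (k2-k4) k3))*hn
  linarith [q1, q2, q3, q4, hfin]

/-- coercivity of the Oseen–Frank density under Ericksen's inequalities,
on tangent matrices. -/
theorem oseen_frank_coercive (k1 k2 k3 k4 : ℝ)
    (h1 : 0 < k1) (h2 : |k4| < k2) (h3 : 0 < k3) (h4 : k2 + k4 < 2 * k1) :
    ∃ a : ℝ, 0 < a ∧ ∀ (z : V3) (p : M3), normSq3 z = 1 →
      (∀ α : Fin 3, ∑ i, z i * p i α = 0) →
      a * frobSq p ≤ W k1 k2 k3 k4 z p := by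
  refine ⟨min (min (2*k1-k2-k4) (k2+k4)) (min (k2-k4) k3), ?_, ?_⟩
  · obtain ⟨h2a, h2b⟩ := abs_lt.mp h2
    exact lt_min (lt_min (by linarith) (by linarith)) (lt_min (by linarith) h3)
  · intro z p hz hc
    have g0 := hc 0
    have g1 := hc 1
    have g2 := hc 2
    simp only [Fin.sum_univ_three] at g0 g1 g2
    simp only [normSq3, Fin.sum_univ_three] at hz
    have key := of_key k1 k2 k3 k4 h2 h3 h4 (z 0) (z 1) (z 2) (p 0 0) (p 0 1) (p 0 2)
      (p 1 0) (p 1 1) (p 1 2) (p 2 0) (p 2 1) (p 2 2) hz g0 g1 g2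
    simp only [W, frobSq, trA, trSq, normSq3, dot3, cross3, curlv, Fin.sum_univ_three,
      Matrix.cons_val_zero, Matrix.cons_val_one, Matrix.head_cons, Matrix.cons_val_two,
      Matrix.tail_cons]
    linarith [key]

end
end

section
/- For every orthogonal 3×3 matrix Q (Q ∈ O(3)), every z ∈ ℝ³ and all real 3×3 matrices p and q, the following identity holds: Σ_{i,k,α} z^i z^k W_{p^k_α}(z,p) q^i_α = Σ_{i,k,α} (Qz)^i (Qz)^k W_{p^k_α}(Qz, QpQᵀ) (QqQᵀ)^i_α. Equivalently, if u, w : ℝ³ → ℝ³ are differentiable, x = Qᵀy, ũ(y) = Qu(Qᵀy) and w̃(y) = Qw(Qᵀy), then Σ u^i u^k W_{p^k_α}(u,∇u) ∂_α w^i evaluated at x equals Σ ũ^i ũ^k W_{p^k_α}(ũ,∇ũ) ∂_α w̃^i evaluated at y. -/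
noncomputable section

open MeasureTheory Metric Filter Topology

-- polarization bilinear form
def Bpol (k1 k2 k3 k4 : ℝ) (z : V3) (p A : M3) : ℝ :=
  2*k1*trA p*trA A + 2*k2*(dot3 z (curlv p))*(dot3 z (curlv A))
  + 2*k3*(dot3 (cross3 z (curlv p)) (cross3 z (curlv A)))
  + (k2+k4)*(2*(∑ i, ∑ j, p i j * A j i) - 2*trA p*trA A)

lemma Wquad (k1 k2 k3 k4 : ℝ) (z : V3) (p A : M3) (s : ℝ) :
    W k1 k2 k3 k4 z (p + s • A)
      = W k1 k2 k3 k4 z p + s * Bpol k1 k2 k3 k4 z p A + s^2 * W k1 k2 k3 k4 z A := by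
  simp only [W, Bpol, trA, trSq, dot3, cross3, curlv, normSq3, Fin.sum_univ_three,
    Matrix.add_apply, Matrix.smul_apply, smul_eq_mul, Matrix.cons_val_zero,
    Matrix.cons_val_one, Matrix.head_cons, Matrix.cons_val_two, Matrix.tail_cons]
  ring

lemma deriv_quad (a b c : ℝ) : deriv (fun s : ℝ => c + s * b + s^2 * a) 0 = b := by
  have h : HasDerivAt (fun s : ℝ => c + s * b + s^2 * a) (0 + 1 * b + (2 * (0:ℝ)^1) * a) 0 :=
    ((hasDerivAt_const (0:ℝ) c).add ((hasDerivAt_id (0:ℝ)).mul_const b)).add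
      ((hasDerivAt_pow 2 (0:ℝ)).mul_const a)
  simpa using h.deriv

lemma Wp_eq (k1 k2 k3 k4 : ℝ) (z : V3) (p : M3) (i α : Fin 3) :
    Wp k1 k2 k3 k4 z p i α = Bpol k1 k2 k3 k4 z p (Matrix.single i α 1) := by
  unfold Wp
  have h : (fun s : ℝ => W k1 k2 k3 k4 z (p + s • Matrix.single i α (1:ℝ)))
      = fun s : ℝ => W k1 k2 k3 k4 z p
          + s * Bpol k1 k2 k3 k4 z p (Matrix.single i α 1)
          + s^2 * W k1 k2 k3 k4 z (Matrix.single i α 1) :=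
    funext fun s => Wquad ..
  rw [h, deriv_quad]


lemma Bpol_add (k1 k2 k3 k4 : ℝ) (z : V3) (p A B : M3) :
    Bpol k1 k2 k3 k4 z p (A + B) = Bpol k1 k2 k3 k4 z p A + Bpol k1 k2 k3 k4 z p B := by
  simp only [Bpol, trA, dot3, cross3, curlv, Fin.sum_univ_three, Matrix.add_apply,
    Matrix.cons_val_zero, Matrix.cons_val_one, Matrix.head_cons, Matrix.cons_val_two,
    Matrix.tail_cons]
  ring

lemma Bpol_smul (k1 k2 k3 k4 : ℝ) (z : V3) (p : M3) (c : ℝ) (A : M3) :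
    Bpol k1 k2 k3 k4 z p (c • A) = c * Bpol k1 k2 k3 k4 z p A := by
  simp only [Bpol, trA, dot3, cross3, curlv, Fin.sum_univ_three, Matrix.smul_apply,
    smul_eq_mul, Matrix.cons_val_zero, Matrix.cons_val_one, Matrix.head_cons,
    Matrix.cons_val_two, Matrix.tail_cons]
  ring

def BpolL (k1 k2 k3 k4 : ℝ) (z : V3) (p : M3) : M3 →ₗ[ℝ] ℝ where
  toFun := Bpol k1 k2 k3 k4 z p
  map_add' := Bpol_add k1 k2 k3 k4 z p
  map_smul' := fun c A => by simpa using Bpol_smul k1 k2 k3 k4 z p c A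

lemma Bpol_rep (k1 k2 k3 k4 : ℝ) (z : V3) (p A : M3) :
    Bpol k1 k2 k3 k4 z p A
      = ∑ k, ∑ α, A k α * Bpol k1 k2 k3 k4 z p (Matrix.single k α 1) := by
  conv_lhs => rw [Matrix.matrix_eq_sum_single A]
  have h := map_sum (BpolL k1 k2 k3 k4 z p)
    (fun k => ∑ α, Matrix.single k α (A k α)) Finset.univ
  simp only [BpolL, LinearMap.coe_mk, AddHom.coe_mk] at h
  rw [h]
  refine Finset.sum_congr rfl fun k _ => ?_
  have h2 := map_sum (BpolL k1 k2 k3 k4 z p)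
    (fun α => Matrix.single k α (A k α)) Finset.univ
  simp only [BpolL, LinearMap.coe_mk, AddHom.coe_mk] at h2
  rw [h2]
  refine Finset.sum_congr rfl fun α _ => ?_
  have h3 : Matrix.single k α (A k α) = (A k α) • Matrix.single k α (1:ℝ) := by
    rw [Matrix.smul_single, smul_eq_mul, mul_one]
  rw [h3, Bpol_smul]

lemma contract (k1 k2 k3 k4 : ℝ) (z : V3) (p q : M3) :
    ∑ i, ∑ k, ∑ α, z i * z k * Wp k1 k2 k3 k4 z p k α * q i α
      = Bpol k1 k2 k3 k4 z p (Matrix.vecMulVec z (Matrix.vecMul z q)) := by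
  rw [Bpol_rep]
  simp only [← Wp_eq, Matrix.vecMulVec_apply, Matrix.vecMul, dotProduct,
    Fin.sum_univ_three]
  ring

lemma trA_trace (p : M3) : trA p = Matrix.trace p := rfl

lemma trA_conj (Q : M3) (hQ' : Q.transpose * Q = 1) (p : M3) :
    trA (Q * p * Q.transpose) = trA p := by
  rw [trA_trace, trA_trace, Matrix.trace_mul_cycle, hQ', Matrix.one_mul]

lemma trSq_trace (p : M3) : trSq p = Matrix.trace (p * p) := by
  simp [trSq, Matrix.trace, Matrix.diag, Matrix.mul_apply]

lemma trSq_conj (Q : M3) (hQ' : Q.transpose * Q = 1) (p : M3) :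
    trSq (Q * p * Q.transpose) = trSq p := by
  rw [trSq_trace, trSq_trace]
  have h : (Q * p * Q.transpose) * (Q * p * Q.transpose) = Q * (p * p) * Q.transpose := by
    have hx : ∀ X : M3, Q.transpose * (Q * X) = X := fun X => by
      rw [← Matrix.mul_assoc, hQ', Matrix.one_mul]
    simp only [Matrix.mul_assoc, hx]
  rw [h, Matrix.trace_mul_cycle, ← Matrix.mul_assoc, hQ', Matrix.one_mul]

lemma curl_conj (A p : M3) :
    curlv (A * p * A.transpose) = (Matrix.adjugate A).transpose.mulVec (curlv p) := by
  funext i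
  fin_cases i <;>
    simp [curlv, Matrix.mul_apply, Matrix.mulVec, dotProduct,
      Matrix.adjugate_fin_three, Fin.sum_univ_three, Matrix.transpose_apply] <;>
    ring

lemma adj_orth (Q : M3) (hQ : Q * Q.transpose = 1) :
    Matrix.adjugate Q = Q.det • Q.transpose := by
  have h := Matrix.adjugate_mul Q
  calc Matrix.adjugate Q = Matrix.adjugate Q * (Q * Q.transpose) := by rw [hQ, Matrix.mul_one]
  _ = (Matrix.adjugate Q * Q) * Q.transpose := by rw [Matrix.mul_assoc]
  _ = Q.det • Q.transpose := by rw [h, Matrix.smul_mul, Matrix.one_mul]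

lemma detsq (Q : M3) (hQ : Q * Q.transpose = 1) : Q.det * Q.det = 1 := by
  have := congrArg Matrix.det hQ
  simpa [Matrix.det_mul, Matrix.det_transpose] using this

lemma dot3_dotProduct (a b : V3) : dot3 a b = dotProduct a b := rfl

lemma dot3_mulVec (Q : M3) (hQ' : Q.transpose * Q = 1) (a b : V3) :
    dot3 (Q.mulVec a) (Q.mulVec b) = dot3 a b := by
  rw [dot3_dotProduct, dot3_dotProduct, Matrix.dotProduct_mulVec]
  have h : Matrix.vecMul (Q.mulVec a) Q = a := by
    rw [← Matrix.vecMul_transpose, Matrix.vecMul_vecMul, hQ', Matrix.vecMul_one]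
  rw [h]

lemma cross_norm (a b : V3) :
    normSq3 (cross3 a b) = dot3 a a * dot3 b b - (dot3 a b)^2 := by
  simp only [normSq3, cross3, dot3, Fin.sum_univ_three, Matrix.cons_val_zero,
    Matrix.cons_val_one, Matrix.head_cons, Matrix.cons_val_two, Matrix.tail_cons]
  ring

lemma dot3_smul_right (c : ℝ) (a b : V3) : dot3 a (c • b) = c * dot3 a b := by
  simp only [dot3, Pi.smul_apply, smul_eq_mul, Finset.mul_sum]
  exact Finset.sum_congr rfl fun i _ => by ring

lemma dot3_smul_left (c : ℝ) (a b : V3) : dot3 (c • a) b = c * dot3 a b := by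
  simp only [dot3, Pi.smul_apply, smul_eq_mul, Finset.mul_sum]
  exact Finset.sum_congr rfl fun i _ => by ring

lemma W_inv (k1 k2 k3 k4 : ℝ) (Q : M3) (hQ : Q * Q.transpose = 1)
    (hQ' : Q.transpose * Q = 1) (z : V3) (p : M3) :
    W k1 k2 k3 k4 (Q.mulVec z) (Q * p * Q.transpose) = W k1 k2 k3 k4 z p := by
  have hdet := detsq Q hQ
  have hcurl : curlv (Q * p * Q.transpose) = Q.det • Q.mulVec (curlv p) := by
    rw [curl_conj, adj_orth Q hQ, Matrix.transpose_smul, Matrix.transpose_transpose,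
      Matrix.smul_mulVec]
  unfold W
  rw [trA_conj Q hQ', trSq_conj Q hQ', hcurl, cross_norm, cross_norm]
  simp only [dot3_smul_left, dot3_smul_right, dot3_mulVec Q hQ']
  linear_combination (k2 * (dot3 z (curlv p))^2 + k3 * dot3 z z * dot3 (curlv p) (curlv p)
    - k3 * (dot3 z (curlv p))^2) * hdet

lemma Bpol_polar (k1 k2 k3 k4 : ℝ) (z : V3) (p A : M3) :
    Bpol k1 k2 k3 k4 z p A
      = W k1 k2 k3 k4 z (p + A) - W k1 k2 k3 k4 z p - W k1 k2 k3 k4 z A := by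
  have h := Wquad k1 k2 k3 k4 z p A 1
  rw [one_smul] at h
  rw [h]; ring

lemma Bpol_inv (k1 k2 k3 k4 : ℝ) (Q : M3) (hQ : Q * Q.transpose = 1)
    (hQ' : Q.transpose * Q = 1) (z : V3) (p A : M3) :
    Bpol k1 k2 k3 k4 (Q.mulVec z) (Q * p * Q.transpose) (Q * A * Q.transpose)
      = Bpol k1 k2 k3 k4 z p A := by
  have hadd : Q * p * Q.transpose + Q * A * Q.transpose = Q * (p + A) * Q.transpose := by
    rw [Matrix.mul_add, Matrix.add_mul]
  rw [Bpol_polar, Bpol_polar, hadd, W_inv k1 k2 k3 k4 Q hQ hQ', W_inv k1 k2 k3 k4 Q hQ hQ',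
    W_inv k1 k2 k3 k4 Q hQ hQ']

lemma vecMulVec_conj (Q : M3) (a b : V3) :
    Q * Matrix.vecMulVec a b * Q.transpose
      = Matrix.vecMulVec (Q.mulVec a) (Q.mulVec b) := by
  ext k α
  simp only [Matrix.mul_apply, Matrix.vecMulVec_apply, Matrix.mulVec, dotProduct,
    Matrix.transpose_apply, Fin.sum_univ_three]
  ring

lemma vecMul_transform (Q : M3) (hQ' : Q.transpose * Q = 1) (z : V3) (q : M3) :
    Matrix.vecMul (Q.mulVec z) (Q * q * Q.transpose)
      = Q.mulVec (Matrix.vecMul z q) := by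
  rw [← Matrix.vecMul_transpose Q z, Matrix.vecMul_vecMul]
  have h : Q.transpose * (Q * q * Q.transpose) = q * Q.transpose := by
    rw [← Matrix.mul_assoc, ← Matrix.mul_assoc, hQ', Matrix.one_mul]
  rw [h, ← Matrix.vecMul_vecMul, Matrix.vecMul_transpose]


/-- rotation invariance of the term u^i u^k W_{p^k_α}(u,∇u) ∂_α w^i
(Lemma 5.3). -/
theorem rotation_invariance_of_projection_term (k1 k2 k3 k4 : ℝ)
    (Q : M3) (hQ : Q * Q.transpose = 1) (hQ' : Q.transpose * Q = 1)
    (z : V3) (p q : M3) :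
    ∑ i, ∑ k, ∑ α, z i * z k * Wp k1 k2 k3 k4 z p k α * q i α
      = ∑ i, ∑ k, ∑ α, (Q.mulVec z) i * (Q.mulVec z) k
          * Wp k1 k2 k3 k4 (Q.mulVec z) (Q * p * Q.transpose) k α
          * (Q * q * Q.transpose) i α := by
  rw [contract, contract, vecMul_transform Q hQ', ← vecMulVec_conj,
    Bpol_inv k1 k2 k3 k4 Q hQ hQ']


end
end
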